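/- arXiv:1808.05166 — 2 statements merged into one kernel-verified Lean document; each statement's English description precedes it below -/
import Mathlib

section
/- Let a be the constant sequence of value r₁ with length n₁ and b the constant sequence of value r₂ with length n₂, with r₁, r₂ ≥ 0. Then a and b are realizable as the degree sequences of the two sides of a simple bipartite graph if and only if r₁ ≤ n₂, r₂ ≤ n₁, and r₁·n₁ = r₂·n₂. -/
/-!
Necessity is double counting of the edges. For sufficiency, cut the `n₁ r₁ = r₂ n₂` edge slots
into `n₁` consecutive blocks of length `r₁` (one per left vertex) and, read the other way, into
`r₂` consecutive blocks of length `n₂` (slot `s` goes to right vertex `s % n₂`). Every right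
vertex then receives `r₂` slots, and a left block, being shorter than `n₂`, meets each right
vertex at most once, so no edge is doubled.
-/

open Finset

theorem card_mul_eq_card_mul_of_ncard_eq {α β : Type*} [Fintype α] [Fintype β]
    (E : α → β → Prop) {m n : ℕ} (hα : ∀ a, {b | E a b}.ncard = m)
    (hβ : ∀ b, {a | E a b}.ncard = n) :
    Fintype.card α * m = Fintype.card β * n := by
  classical
  refine card_mul_eq_card_mul E (s := univ) (t := univ) (fun a _ => ?_) (fun b _ => ?_)
  · rw [← hα a, Set.ncard_eq_toFinset_card', Set.toFinset_ofPred]; rfl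
  · rw [← hβ b, Set.ncard_eq_toFinset_card', Set.toFinset_ofPred]; rfl

theorem exists_biregular_of_equiv {α β κ μ : Type*} [Finite κ] [Finite μ]
    (e : α × κ ≃ μ × β) (he : ∀ a, Function.Injective fun k => (e (a, k)).2) :
    ∃ E : α → β → Prop,
      (∀ a, {b | E a b}.ncard = Nat.card κ) ∧ (∀ b, {a | E a b}.ncard = Nat.card μ) := by
  refine ⟨fun a b => ∃ k, (e (a, k)).2 = b, fun a => Set.ncard_range_of_injective (he a),
    fun b => ?_⟩
  have hrange : {a | ∃ k, (e (a, k)).2 = b} = Set.range fun l => (e.symm (l, b)).1 := by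
    ext a
    constructor
    · rintro ⟨k, rfl⟩
      exact ⟨(e (a, k)).1, by simp⟩
    · rintro ⟨l, rfl⟩
      exact ⟨(e.symm (l, b)).2, by simp⟩
  rw [hrange]
  refine Set.ncard_range_of_injective fun l l' hll' => ?_
  have hslot : e.symm (l, b) = e.symm (l', b) := by
    refine Prod.ext hll' (he (e.symm (l, b)).1 ?_)
    simp only [Prod.mk.eta, Equiv.apply_symm_apply]
    rw [hll', Prod.mk.eta, Equiv.apply_symm_apply]
  simpa using hslot

theorem mod_add_mul_injective {r n : ℕ} (hrn : r ≤ n) (i : ℕ) :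
    Function.Injective fun k : Fin r => (k + r * i) % n := by
  intro k k' hkk'
  have hmod : (k : ℕ) % n = k' % n := Nat.ModEq.add_right_cancel' (r * i) hkk'
  rw [Nat.mod_eq_of_lt (by omega), Nat.mod_eq_of_lt (by omega)] at hmod
  exact Fin.ext hmod

/-- Gale–Ryser corollary: constant degree sequences `(r₁,…,r₁)` (length `n₁`) and
`(r₂,…,r₂)` (length `n₂`) are realizable as the two sides of a simple bipartite
graph iff `r₁ ≤ n₂`, `r₂ ≤ n₁` and `r₁ n₁ = r₂ n₂`. -/
theorem biregular_bipartite_iff (n₁ n₂ r₁ r₂ : ℕ) (h₁ : 0 < n₁) (h₂ : 0 < n₂) :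
    (∃ E : Fin n₁ → Fin n₂ → Prop,
        (∀ i, {j | E i j}.ncard = r₁) ∧ (∀ j, {i | E i j}.ncard = r₂)) ↔
      (r₁ ≤ n₂ ∧ r₂ ≤ n₁ ∧ r₁ * n₁ = r₂ * n₂) := by
  constructor
  · rintro ⟨E, hrow, hcol⟩
    have hcount := card_mul_eq_card_mul_of_ncard_eq E hrow hcol
    simp only [Fintype.card_fin] at hcount
    refine ⟨?_, ?_, by linarith⟩
    · simpa [hrow ⟨0, h₁⟩] using Set.ncard_le_card {j | E ⟨0, h₁⟩ j}
    · simpa [hcol ⟨0, h₂⟩] using Set.ncard_le_card {i | E i ⟨0, h₂⟩}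
  · rintro ⟨hr₁, -, hedges⟩
    let e : Fin n₁ × Fin r₁ ≃ Fin r₂ × Fin n₂ :=
      finProdFinEquiv.trans ((finCongr (by linarith)).trans finProdFinEquiv.symm)
    have he : ∀ i, Function.Injective fun k => (e (i, k)).2 := fun i k k' hkk' =>
      mod_add_mul_injective hr₁ i (congrArg Fin.val hkk')
    simpa using exists_biregular_of_equiv e he
end

section
/- There exists a simple graph G on 10 vertices admitting an equitable partition into two cells C₁ (8 vertices) and C₂ (2 vertices) with quotient matrix Q₁₁ = 3, Q₁₂ = 1, Q₂₁ = 4, Q₂₂ = 1, whose automorphism group is trivial (hence the orbit partition of Aut(G) has 10 singleton cells while the minimal equitable partition has at most 2 cells). -/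
/-!
An automorphism preserves the colouring of vertices by degree and number of triangles, and if it
fixes every vertex of a set `F` it also preserves adjacency to each vertex of `F`; so it fixes
every vertex whose colour and neighbourhood in `F` are shared by no other vertex. Starting from
`F = ∅` this forces the fixed sets `{0}`, `{0, 2, 8, 9}`, all vertices but `4` and `6`, and then
all ten vertices. Triangles are needed: colour refinement from degrees alone stops at the
equitable partition `{0, …, 7}, {8, 9}`.
-/

open Finset

namespace SimpleGraph

variable {V W : Type*} [Fintype V] [Fintype W]
  {G : SimpleGraph V} {G' : SimpleGraph W} [DecidableRel G.Adj] [DecidableRel G'.Adj]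

theorem Iso.map_neighborFinset (f : G ≃g G') (v : V) :
    (G.neighborFinset v).map f.toEquiv.toEmbedding = G'.neighborFinset (f v) := by
  ext w
  obtain ⟨u, rfl⟩ := f.surjective w
  rw [mem_map_equiv, mem_neighborFinset, mem_neighborFinset, f.map_adj_iff]
  exact iff_of_eq (congrArg _ (f.toEquiv.symm_apply_apply u))

variable [DecidableEq V] [DecidableEq W]

variable (G) in
/-- Twice the number of triangles through `v`: a triangle `v w x` is counted from `w` and
from `x`. -/
def triangleCount (v : V) : ℕ :=
  ∑ w ∈ G.neighborFinset v, #(G.neighborFinset v ∩ G.neighborFinset w)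

theorem Iso.triangleCount_eq (f : G ≃g G') (v : V) :
    G'.triangleCount (f v) = G.triangleCount v := by
  rw [triangleCount, triangleCount, ← f.map_neighborFinset, sum_map]
  refine sum_congr rfl fun w _ => ?_
  change #(_ ∩ G'.neighborFinset (f w)) = _
  rw [← f.map_neighborFinset, ← map_inter, card_map]

theorem Iso.neighborFinset_inter_eq_of_forall_mem_apply_eq (σ : G ≃g G) {F : Finset V}
    (hF : ∀ x ∈ F, σ x = x) (v : V) :
    G.neighborFinset (σ v) ∩ F = G.neighborFinset v ∩ F := by
  ext x
  simp only [mem_inter, mem_neighborFinset, and_congr_left_iff]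
  intro hx
  rw [← hF x hx, σ.map_adj_iff, hF x hx]

variable {α : Type*} [DecidableEq α]

variable (G) in
def refineFixedSet (c : V → α) (F : Finset V) : Finset V :=
  F ∪ ({v | ∀ w, c w = c v → G.neighborFinset w ∩ F = G.neighborFinset v ∩ F → w = v} :
    Finset V)

theorem Iso.apply_eq_of_mem_refineFixedSet (σ : G ≃g G) {c : V → α}
    (hc : ∀ v, c (σ v) = c v) {F : Finset V} (hF : ∀ x ∈ F, σ x = x) {v : V}
    (hv : v ∈ G.refineFixedSet c F) :
    σ v = v := by
  rcases mem_union.1 hv with hv | hv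
  · exact hF v hv
  · exact (mem_filter.1 hv).2 (σ v) (hc v)
      (σ.neighborFinset_inter_eq_of_forall_mem_apply_eq hF v)

theorem Iso.apply_eq_of_iterate_refineFixedSet_eq_univ (σ : G ≃g G) {c : V → α}
    (hc : ∀ v, c (σ v) = c v) {n : ℕ} (hn : (G.refineFixedSet c)^[n] ∅ = univ) (v : V) :
    σ v = v := by
  have hfix : ∀ k, ∀ x ∈ (G.refineFixedSet c)^[k] ∅, σ x = x := by
    intro k
    induction k with
    | zero => simp
    | succ k ih =>
      rw [Function.iterate_succ_apply']
      exact fun x hx => σ.apply_eq_of_mem_refineFixedSet hc ih hx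
  exact hfix n v (hn ▸ mem_univ v)

end SimpleGraph

open SimpleGraph

def rigidEquitableGraph : SimpleGraph (Fin 10) :=
  fromEdgeSet ↑({s(0, 2), s(0, 4), s(0, 6), s(0, 9), s(1, 2), s(1, 3), s(1, 5), s(1, 9), s(2, 3),
    s(2, 8), s(3, 6), s(3, 8), s(4, 5), s(4, 7), s(4, 8), s(5, 7), s(5, 9), s(6, 7), s(6, 8),
    s(7, 9), s(8, 9)} : Finset (Sym2 (Fin 10)))

instance : DecidableRel rigidEquitableGraph.Adj := by unfold rigidEquitableGraph; infer_instance

theorem rigidEquitableGraph_refineFixedSet_iterate :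
    (rigidEquitableGraph.refineFixedSet
      fun v => (rigidEquitableGraph.degree v, rigidEquitableGraph.triangleCount v))^[4] ∅ =
      univ := by
  decide +kernel

/-- There is a simple graph on 10 vertices with an equitable partition into cells
`{0,…,7}` and `{8,9}` with quotient matrix `Q₁₁ = 3, Q₁₂ = 1, Q₂₁ = 4, Q₂₂ = 1`,
whose automorphism group is trivial. -/
theorem exists_graph_trivial_aut_nontrivial_equitable :
    ∃ G : SimpleGraph (Fin 10),
      (∀ v : Fin 10, v.val < 8 →
        {w | G.Adj v w ∧ w.val < 8}.ncard = 3 ∧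
        {w | G.Adj v w ∧ 8 ≤ w.val}.ncard = 1) ∧
      (∀ v : Fin 10, 8 ≤ v.val →
        {w | G.Adj v w ∧ w.val < 8}.ncard = 4 ∧
        {w | G.Adj v w ∧ 8 ≤ w.val}.ncard = 1) ∧
      (∀ σ : G ≃g G, ∀ v, σ v = v) := by
  refine ⟨rigidEquitableGraph, ?_, ?_, fun σ => σ.apply_eq_of_iterate_refineFixedSet_eq_univ
    (fun v => Prod.ext (σ.degree_eq v) (σ.triangleCount_eq v))
    rigidEquitableGraph_refineFixedSet_iterate⟩
  all_goals
    simp only [Set.ncard_eq_toFinset_card', Set.toFinset_ofPred]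
    decide
end
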